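/- arXiv:2404.08084 — 4 statements merged into one kernel-verified Lean document; each statement's English description precedes it below -/
import Mathlib

section
/- Let n ≥ 1 and write n = 2^{k₀} · p₁^{k₁} ⋯ p_l^{k_l} where p₁, …, p_l are distinct odd primes, k₀ ≥ 0 and kᵢ ≥ 1 for 1 ≤ i ≤ l. Then the number of equivalence classes of ℤ/nℤ under the square-multiplication relation equals c(n) := ε(k₀) · ∏_{i=1}^{l} (2kᵢ + 1), where ε(0) = 1, ε(1) = 2, ε(2) = 4, and ε(k₀) = 4(k₀ − 1) for k₀ ≥ 3. (Equivalently, there are exactly c(n) pointed fusion categories of the form Vect_{ℤ/nℤ}^{ζ} up to monoidal equivalence.) -/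
open scoped BigOperators

/-! The number of classes is multiplicative in `n`: the Chinese remainder isomorphism carries
units to units, and on a product the relation splits componentwise. In `ZMod (p ^ (k + 1))`
every element is a unit or a multiple of `p`. The classes of units are the cosets of the subgroup
`U²` of squares in the unit group `U`, and `p * b ↦ b mod p ^ k` identifies the classes of
multiples of `p` with the classes of `ZMod (p ^ k)`, so `c(p^(k+1)) = [U : U²] + c(p^k)`.
For odd `p` the group `U` is cyclic of even order and `[U : U²] = 2`. For `p = 2` the index is
`1, 2` when `k + 1 = 1, 2`; when `k + 1 ≥ 3` it is `4`, because `U²` lies in the kernel of the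
reduction to `(ZMod 8)ˣ` (every unit mod 8 squares to 1) and contains the powers of `25`, which
has order `2 ^ (k - 2)`, while `|U| = 2 ^ k`. -/

/-- The square-multiplication relation on `ℤ/nℤ`: `a ∼ b` iff `b = j² · a` for some unit `j`. -/
def sqRel (n : ℕ) (a b : ZMod n) : Prop :=
  ∃ j : (ZMod n)ˣ, b = (j : ZMod n) ^ 2 * a

section UnitSq

variable {M N : Type*} [CommMonoid M] [CommMonoid N]

def unitSqSetoid (M : Type*) [CommMonoid M] : Setoid M where
  r a b := ∃ j : Mˣ, b = (j : M) ^ 2 * a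
  iseqv :=
    { refl a := ⟨1, by simp⟩
      symm := by
        rintro a _ ⟨j, rfl⟩
        exact ⟨j⁻¹, by rw [← mul_assoc, ← mul_pow, ← Units.val_mul, inv_mul_cancel,
          Units.val_one, one_pow, one_mul]⟩
      trans := by
        rintro a _ _ ⟨j, rfl⟩ ⟨i, rfl⟩
        exact ⟨i * j, by rw [Units.val_mul, mul_pow, mul_assoc]⟩ }

theorem unitSqSetoid_map (f : M →* N) {a b : M} (h : unitSqSetoid M a b) :
    unitSqSetoid N (f a) (f b) := by
  obtain ⟨j, rfl⟩ := h
  exact ⟨Units.map f j, by simp⟩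

theorem unitSqSetoid_mulEquiv_iff (e : M ≃* N) {a b : M} :
    unitSqSetoid N (e a) (e b) ↔ unitSqSetoid M a b :=
  ⟨fun h => by simpa using unitSqSetoid_map e.symm.toMonoidHom h,
    unitSqSetoid_map e.toMonoidHom⟩

theorem unitSqSetoid_prod_iff {a b : M × N} :
    unitSqSetoid (M × N) a b ↔ unitSqSetoid M a.1 b.1 ∧ unitSqSetoid N a.2 b.2 := by
  constructor
  · rintro ⟨j, rfl⟩
    exact ⟨unitSqSetoid_map (MonoidHom.fst M N) ⟨j, rfl⟩,
      unitSqSetoid_map (MonoidHom.snd M N) ⟨j, rfl⟩⟩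
  · rintro ⟨⟨j₁, h₁⟩, ⟨j₂, h₂⟩⟩
    exact ⟨MulEquiv.prodUnits.symm (j₁, j₂), Prod.ext h₁ h₂⟩

theorem IsUnit.of_unitSqSetoid {a b : M} (ha : IsUnit a) (h : unitSqSetoid M a b) :
    IsUnit b := by
  obtain ⟨j, rfl⟩ := h
  exact (j.isUnit.pow 2).mul ha

variable (M) in
abbrev unitsSq : Subgroup Mˣ := (powMonoidHom 2 : Mˣ →* Mˣ).range

theorem unitSqSetoid_units_iff {u v : Mˣ} :
    unitSqSetoid M u v ↔ QuotientGroup.leftRel (unitsSq M) u v := by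
  rw [QuotientGroup.leftRel_apply]
  refine ⟨fun ⟨j, h⟩ => ⟨j, ?_⟩, fun ⟨j, h⟩ => ⟨j, ?_⟩⟩
  · rw [powMonoidHom_apply, eq_inv_mul_iff_mul_eq, mul_comm]
    exact (Units.ext h).symm
  · rw [powMonoidHom_apply, eq_inv_mul_iff_mul_eq, mul_comm] at h
    rw [← h]
    push_cast
    rfl

variable (M) in
def unitsSqClass : Mˣ ⧸ unitsSq M → Quotient (unitSqSetoid M) :=
  Quotient.map' Units.val fun _ _ => unitSqSetoid_units_iff.mpr

theorem unitsSqClass_injective : Function.Injective (unitsSqClass M) := by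
  rintro ⟨u⟩ ⟨v⟩ h
  exact Quotient.sound (unitSqSetoid_units_iff.mp (Quotient.exact h))

end UnitSq

theorem card_quotient_unitSqSetoid_int : Nat.card (Quotient (unitSqSetoid ℤ)) = 0 := by
  have : Function.Injective (Quotient.mk (unitSqSetoid ℤ)) := fun a b h => by
    obtain ⟨j, hj⟩ := Quotient.exact h
    rw [← Units.val_pow_eq_pow_val, Int.units_sq, Units.val_one, one_mul] at hj
    exact hj.symm
  have := Infinite.of_injective _ this
  exact Nat.card_eq_zero_of_infinite

/-- `ZMod 0 = ℤ` has infinitely many classes, so `Nat.card` gives the value `0` at `0` that an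
arithmetic function must have. -/
noncomputable def sqClassCount : ArithmeticFunction ℕ :=
  ⟨fun n => Nat.card (Quotient (unitSqSetoid (ZMod n))), card_quotient_unitSqSetoid_int⟩

theorem sqClassCount_apply (n : ℕ) :
    sqClassCount n = Nat.card (Quotient (unitSqSetoid (ZMod n))) := rfl

theorem isMultiplicative_sqClassCount : sqClassCount.IsMultiplicative := by
  refine ⟨Nat.card_unique, fun {m n} h => ?_⟩
  rw [sqClassCount_apply, sqClassCount_apply, sqClassCount_apply, ← Nat.card_prod]
  exact Nat.card_congr <| (Quotient.congr (ZMod.chineseRemainder h).toEquiv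
    fun a b => (unitSqSetoid_mulEquiv_iff (ZMod.chineseRemainder h).toMulEquiv).symm).trans <|
      (Quotient.congrRight fun a b => unitSqSetoid_prod_iff).trans
        (Setoid.prodQuotientEquiv _ _).symm

section PrimePower

variable {p : ℕ} [hp : Fact p.Prime] (k : ℕ)

local notation "π" => ZMod.castHom (pow_dvd_pow p k.le_succ) (ZMod (p ^ k))

theorem ZMod.isUnit_or_exists_eq_prime_mul (a : ZMod (p ^ (k + 1))) :
    IsUnit a ∨ ∃ b, a = p * b := by
  obtain ⟨v, rfl⟩ := ZMod.natCast_zmod_surjective a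
  rw [ZMod.isUnit_natCast_iff_not_dvd_pow hp.out k.succ_pos, or_iff_not_imp_left, not_not]
  rintro ⟨t, rfl⟩
  exact ⟨t, by push_cast; rfl⟩

theorem ZMod.not_isUnit_prime_mul (b : ZMod (p ^ (k + 1))) :
    ¬IsUnit ((p : ZMod (p ^ (k + 1))) * b) :=
  fun h => ZMod.prime_natCast_not_isUnit_pow hp.out k.succ_pos (isUnit_of_mul_isUnit_left h)

theorem ZMod.prime_mul_eq_prime_mul_iff (b c : ZMod (p ^ (k + 1))) :
    (p : ZMod (p ^ (k + 1))) * b = p * c ↔ π b = π c := by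
  obtain ⟨v, rfl⟩ := ZMod.intCast_surjective b
  obtain ⟨w, rfl⟩ := ZMod.intCast_surjective c
  rw [map_intCast, map_intCast, ZMod.intCast_eq_intCast_iff_dvd_sub,
    ← Int.cast_natCast, ← Int.cast_mul, ← Int.cast_mul, ZMod.intCast_eq_intCast_iff_dvd_sub,
    ← mul_sub, Nat.cast_pow, Nat.cast_pow, pow_succ',
    mul_dvd_mul_iff_left (Int.natCast_ne_zero.mpr hp.out.ne_zero)]

theorem ZMod.unitSqSetoid_prime_mul_iff (b c : ZMod (p ^ (k + 1))) :
    unitSqSetoid _ ((p : ZMod (p ^ (k + 1))) * b) (p * c) ↔ unitSqSetoid _ (π b) (π c) := by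
  constructor
  · rintro ⟨j, hj⟩
    rw [mul_left_comm, ZMod.prime_mul_eq_prime_mul_iff] at hj
    exact ⟨ZMod.unitsMap (pow_dvd_pow p k.le_succ) j, by
      rw [hj, map_mul, map_pow, ZMod.unitsMap_def, Units.coe_map, MonoidHom.coe_coe]⟩
  · rintro ⟨v, hv⟩
    obtain ⟨u, rfl⟩ := ZMod.unitsMap_surjective (pow_dvd_pow p k.le_succ) v
    refine ⟨u, ?_⟩
    rw [mul_left_comm, ZMod.prime_mul_eq_prime_mul_iff, hv, map_mul, map_pow,
      ZMod.unitsMap_def, Units.coe_map, MonoidHom.coe_coe]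

theorem ZMod.castHom_cast_prime_pow (x : ZMod (p ^ k)) : π (ZMod.cast x) = x := by
  rw [ZMod.castHom_apply, ZMod.cast_cast_zmod_of_le (Nat.pow_le_pow_right hp.out.pos k.le_succ)]

variable (p) in
def primeMulSqClass :
    Quotient (unitSqSetoid (ZMod (p ^ k))) → Quotient (unitSqSetoid (ZMod (p ^ (k + 1)))) :=
  Quotient.map (fun x => p * ZMod.cast x) fun x y h =>
    (ZMod.unitSqSetoid_prime_mul_iff k _ _).mpr
      (by rwa [ZMod.castHom_cast_prime_pow, ZMod.castHom_cast_prime_pow])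

variable (p) in
theorem primeMulSqClass_injective : Function.Injective (primeMulSqClass p k) := by
  rintro ⟨x⟩ ⟨y⟩ h
  have := (ZMod.unitSqSetoid_prime_mul_iff k _ _).mp (Quotient.exact h)
  rw [ZMod.castHom_cast_prime_pow, ZMod.castHom_cast_prime_pow] at this
  exact Quotient.sound this

variable (p) in
theorem sqClassCount_prime_pow_succ :
    sqClassCount (p ^ (k + 1)) = (unitsSq (ZMod (p ^ (k + 1)))).index + sqClassCount (p ^ k) := by
  have hdisj : ∀ u x, unitsSqClass _ u ≠ primeMulSqClass p k x := by
    rintro ⟨u⟩ ⟨x⟩ h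
    exact ZMod.not_isUnit_prime_mul k _ (u.isUnit.of_unitSqSetoid (Quotient.exact h))
  have hsurj : Function.Surjective (Sum.elim (unitsSqClass _) (primeMulSqClass p k)) := by
    rintro ⟨a⟩
    rcases ZMod.isUnit_or_exists_eq_prime_mul k a with ⟨u, rfl⟩ | ⟨b, rfl⟩
    · exact ⟨.inl ⟦u⟧, rfl⟩
    · exact ⟨.inr ⟦π b⟧, Quotient.sound ((ZMod.unitSqSetoid_prime_mul_iff k _ _).mpr
        (by rw [ZMod.castHom_cast_prime_pow]))⟩
  rw [sqClassCount_apply, sqClassCount_apply, Subgroup.index, ← Nat.card_sum]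
  exact (Nat.card_eq_of_bijective _
    ⟨unitsSqClass_injective.sumElim (primeMulSqClass_injective p k) hdisj, hsurj⟩).symm

end PrimePower

theorem ZMod.index_unitsSq_of_isCyclic (n : ℕ) [NeZero n] [IsCyclic (ZMod n)ˣ] :
    (unitsSq (ZMod n)).index = n.totient.gcd 2 := by
  rw [IsCyclic.index_powMonoidHom_range, Nat.card_eq_fintype_card, ZMod.card_units_eq_totient]

theorem ZMod.index_unitsSq_odd_prime_pow {p : ℕ} (hp : p.Prime) (hodd : Odd p) (k : ℕ) :
    (unitsSq (ZMod (p ^ (k + 1)))).index = 2 := by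
  have : NeZero (p ^ (k + 1)) := ⟨pow_ne_zero _ hp.ne_zero⟩
  have hp2 : p ≠ 2 := by rintro rfl; exact absurd hodd (by decide)
  have : IsCyclic (ZMod (p ^ (k + 1)))ˣ := ZMod.isCyclic_units_of_prime_pow p hp hp2 _
  have h2 : 2 < p ^ (k + 1) :=
    (hp.two_le.lt_of_ne hp2.symm).trans_le (Nat.le_self_pow k.succ_ne_zero p)
  rw [ZMod.index_unitsSq_of_isCyclic,
    Nat.gcd_eq_right (even_iff_two_dvd.mp (Nat.totient_even h2))]

theorem ZMod.index_unitsSq_two : (unitsSq (ZMod (2 ^ 1))).index = 1 := by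
  have : IsCyclic (ZMod (2 ^ 1))ˣ := (ZMod.isCyclic_units_two_pow_iff 1).mpr (by norm_num)
  rw [ZMod.index_unitsSq_of_isCyclic]
  decide

theorem ZMod.index_unitsSq_four : (unitsSq (ZMod (2 ^ 2))).index = 2 := by
  have : IsCyclic (ZMod (2 ^ 2))ˣ := (ZMod.isCyclic_units_two_pow_iff 2).mpr le_rfl
  rw [ZMod.index_unitsSq_of_isCyclic]
  decide

theorem ZMod.index_unitsSq_two_pow_add_three (n : ℕ) :
    (unitsSq (ZMod (2 ^ (n + 3)))).index = 4 := by
  set S := unitsSq (ZMod (2 ^ (n + 3)))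
  set toMod8 := ZMod.unitsMap (show 8 ∣ 2 ^ (n + 3) from pow_dvd_pow 2 (by omega : 3 ≤ n + 3))
  have hSker : S ≤ toMod8.ker := by
    rintro _ ⟨u, rfl⟩
    rw [MonoidHom.mem_ker, powMonoidHom_apply, map_pow]
    exact (by decide : ∀ v : (ZMod 8)ˣ, v ^ 2 = 1) _
  have hker : toMod8.ker.index = 4 := by
    rw [Subgroup.index_ker, MonoidHom.range_eq_top.mpr (ZMod.unitsMap_surjective _),
      Subgroup.card_top, Nat.card_eq_fintype_card, ZMod.card_units_eq_totient]
    decide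
  have hcard : Nat.card (ZMod (2 ^ (n + 3)))ˣ = 2 ^ (n + 2) := by
    rw [Nat.card_eq_fintype_card, ZMod.card_units_eq_totient,
      Nat.totient_prime_pow Nat.prime_two (by omega)]
    simp [pow_succ]
  set five : (ZMod (2 ^ (n + 3)))ˣ :=
    ZMod.unitOfCoprime 5 (Nat.Coprime.pow_right _ (by norm_num))
  have hfive : orderOf five = 2 ^ n * 2 := by
    rw [← orderOf_units, ZMod.coe_unitOfCoprime, ← pow_succ]
    exact_mod_cast ZMod.orderOf_five (n + 1)
  have hfive_sq : orderOf (five ^ 2) = 2 ^ n := by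
    rw [orderOf_pow_of_dvd two_ne_zero (hfive ▸ dvd_mul_left 2 _), hfive,
      Nat.mul_div_cancel _ two_pos]
  have hS : 2 ^ n ≤ Nat.card S := by
    rw [← hfive_sq, ← Nat.card_zpowers]
    exact Subgroup.card_le_of_le (Subgroup.zpowers_le.mpr ⟨five, rfl⟩)
  obtain ⟨m, hm⟩ := hker ▸ Subgroup.index_dvd_of_le hSker
  have hm0 : m ≠ 0 := by
    rintro rfl
    exact Subgroup.index_ne_zero_of_finite (hm.trans (mul_zero 4))
  have : 2 ^ n * (4 * m) ≤ 2 ^ n * 4 := calc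
    2 ^ n * (4 * m) ≤ Nat.card S * S.index := by rw [hm]; gcongr
    _ = 2 ^ n * 4 := by rw [Subgroup.card_mul_index, hcard, pow_add]; norm_num
  have := Nat.le_of_mul_le_mul_left this (by positivity)
  omega

theorem sqClassCount_odd_prime_pow {p : ℕ} (hp : p.Prime) (hodd : Odd p) (k : ℕ) :
    sqClassCount (p ^ k) = 2 * k + 1 := by
  have := Fact.mk hp
  induction k with
  | zero => exact isMultiplicative_sqClassCount.map_one
  | succ k ih =>
    rw [sqClassCount_prime_pow_succ, ZMod.index_unitsSq_odd_prime_pow hp hodd, ih]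
    ring

theorem sqClassCount_two_pow : ∀ k : ℕ, sqClassCount (2 ^ k) =
    if k = 0 then 1 else if k = 1 then 2 else if k = 2 then 4 else 4 * (k - 1)
  | 0 => isMultiplicative_sqClassCount.map_one
  | 1 => by
    rw [sqClassCount_prime_pow_succ, ZMod.index_unitsSq_two, sqClassCount_two_pow 0]
    rfl
  | 2 => by
    rw [sqClassCount_prime_pow_succ, ZMod.index_unitsSq_four, sqClassCount_two_pow 1]
    rfl
  | n + 3 => by
    rw [sqClassCount_prime_pow_succ, ZMod.index_unitsSq_two_pow_add_three,
      sqClassCount_two_pow (n + 2)]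
    grind

theorem card_sqRel_classes_general (n : ℕ) (k₀ l : ℕ)
    (p : Fin l → ℕ) (K : Fin l → ℕ)
    (hp : ∀ i, (p i).Prime) (hodd : ∀ i, Odd (p i))
    (hinj : Function.Injective p)
    (hfact : n = 2 ^ k₀ * ∏ i, p i ^ K i) :
    Nat.card (Quot (sqRel n)) =
      (if k₀ = 0 then 1
        else if k₀ = 1 then 2
        else if k₀ = 2 then 4
        else 4 * (k₀ - 1)) * ∏ i, (2 * K i + 1) := by
  have hcop : (2 ^ k₀).Coprime (∏ i, p i ^ K i) :=
    Nat.Coprime.pow_left _ <| Nat.Coprime.prod_right fun i _ =>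
      Nat.Coprime.pow_right _ (Nat.coprime_two_left.mpr (hodd i))
  have hpair : ((Finset.univ : Finset (Fin l)) : Set (Fin l)).Pairwise
      fun i j => (p i ^ K i).Coprime (p j ^ K j) :=
    fun i _ j _ hij =>
      Nat.Coprime.pow _ _ ((Nat.coprime_primes (hp i) (hp j)).mpr (hinj.ne hij))
  change sqClassCount n = _
  rw [hfact, isMultiplicative_sqClassCount.map_mul_of_coprime hcop,
    isMultiplicative_sqClassCount.map_prod _ _ hpair, sqClassCount_two_pow]
  simp_rw [sqClassCount_odd_prime_pow (hp _) (hodd _)]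

/-- For `n = 2^{k₀} · p₁^{k₁} ⋯ p_l^{k_l}` with `p₁, …, p_l` distinct odd primes and
`kᵢ ≥ 1`, the number of equivalence classes of `ℤ/nℤ` under the square-multiplication
relation is `ε(k₀) · ∏ᵢ (2kᵢ + 1)`, where `ε(0)=1`, `ε(1)=2`, `ε(2)=4`, and
`ε(k₀)=4(k₀−1)` for `k₀ ≥ 3`. -/
theorem card_sqRel_classes (n : ℕ) (hn : 1 ≤ n) (k₀ l : ℕ)
    (p : Fin l → ℕ) (K : Fin l → ℕ)
    (hp : ∀ i, (p i).Prime) (hodd : ∀ i, Odd (p i))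
    (hinj : Function.Injective p)
    (hK : ∀ i, 1 ≤ K i)
    (hfact : n = 2 ^ k₀ * ∏ i, p i ^ K i) :
    Nat.card (Quot (sqRel n)) =
      (if k₀ = 0 then 1
        else if k₀ = 1 then 2
        else if k₀ = 2 then 4
        else 4 * (k₀ - 1)) * ∏ i, (2 * K i + 1) :=
  card_sqRel_classes_general n k₀ l p K hp hodd hinj hfact
end

section
/- Let p be an odd prime and K ≥ 1. Then the number of equivalence classes of ℤ/p^Kℤ under the square-multiplication relation equals 2K + 1. -/
theorem isSquare_of_odd_card {G : Type*} [Group G] (hG : Odd (Nat.card G)) (g : G) :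
    IsSquare g :=
  ⟨(powCoprime (Nat.coprime_two_right.mpr hG)).symm g, by
    rw [← sq, ← powCoprime_apply (Nat.coprime_two_right.mpr hG), Equiv.apply_symm_apply]⟩

theorem isSquare_of_isSquare_map {G H : Type*} [CommGroup G] [Group H] {f : G →* H}
    (hf : Function.Surjective f) (hker : Odd (Nat.card f.ker)) {g : G}
    (hg : IsSquare (f g)) : IsSquare g := by
  obtain ⟨h, hh⟩ := hg
  obtain ⟨x, rfl⟩ := hf h
  have hmem : g / (x * x) ∈ f.ker := by simp [hh]
  obtain ⟨s, hs : g / (x * x) = s * s⟩ := (isSquare_of_odd_card hker ⟨_, hmem⟩).map f.ker.subtype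
  exact ⟨s * x, by rw [← div_mul_cancel g (x * x), hs, mul_mul_mul_comm]⟩

theorem Units.isSquare_val_iff {G₀ : Type*} [GroupWithZero G₀] (u : G₀ˣ) :
    IsSquare (u : G₀) ↔ IsSquare u := by
  refine ⟨fun ⟨r, hr⟩ => ?_, fun h => h.map (Units.coeHom G₀)⟩
  have hr0 : r ≠ 0 := by rintro rfl; simp at hr
  exact ⟨Units.mk0 r hr0, Units.ext hr⟩

theorem FiniteField.isSquare_div_iff {F : Type*} [Field F] [Fintype F] {x y : F}
    (hx : x ≠ 0) (hy : y ≠ 0) : IsSquare (y / x) ↔ (IsSquare x ↔ IsSquare y) := by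
  classical
  have hinv : quadraticChar F x⁻¹ = quadraticChar F x := by
    rw [← MulChar.inv_apply', (quadraticChar_isQuadratic F).inv]
  rw [← quadraticChar_one_iff_isSquare (div_ne_zero hy hx), div_eq_mul_inv, map_mul, hinv,
    ← quadraticChar_one_iff_isSquare hx, ← quadraticChar_one_iff_isSquare hy]
  rcases quadraticChar_dichotomy hx with h | h <;>
    rcases quadraticChar_dichotomy hy with h' | h' <;> simp [h, h']

namespace ZMod

theorem card_ker_unitsMap_prime_pow {p m : ℕ} [hp : Fact p.Prime] (hm : m ≠ 0) :
    Nat.card (unitsMap (dvd_pow_self p hm)).ker = p ^ (m - 1) := by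
  have hcard := (unitsMap (dvd_pow_self p hm)).ker.card_mul_index
  rw [Subgroup.index_ker, MonoidHom.range_eq_top.mpr (unitsMap_surjective _), Subgroup.card_top,
    Nat.card_eq_fintype_card (α := (ZMod p)ˣ), Nat.card_eq_fintype_card (α := (ZMod (p ^ m))ˣ),
    card_units_eq_totient, card_units_eq_totient, Nat.totient_prime hp.out,
    Nat.totient_prime_pow hp.out (Nat.pos_of_ne_zero hm)] at hcard
  exact Nat.eq_of_mul_eq_mul_right (Nat.sub_pos_of_lt hp.out.one_lt) hcard

theorem isSquare_unitsMap_prime_pow_iff {p m : ℕ} [Fact p.Prime] (hp : Odd p) (hm : m ≠ 0)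
    {u : (ZMod (p ^ m))ˣ} : IsSquare (unitsMap (dvd_pow_self p hm) u) ↔ IsSquare u :=
  ⟨isSquare_of_isSquare_map (unitsMap_surjective (dvd_pow_self p hm))
    (card_ker_unitsMap_prime_pow (p := p) hm ▸ hp.pow), fun h => h.map _⟩

end ZMod

theorem sqRel_units_iff {n : ℕ} (u v : (ZMod n)ˣ) : sqRel n u v ↔ IsSquare (v / u) := by
  refine exists_congr fun j => ?_
  rw [← Units.val_pow_eq_pow_val, ← Units.val_mul, Units.val_inj, div_eq_iff_eq_mul, sq]

theorem sqRel.gcd_val_eq {n : ℕ} [NeZero n] {a b : ZMod n} (h : sqRel n a b) :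
    b.val.gcd n = a.val.gcd n := by
  obtain ⟨j, rfl⟩ := h
  rw [← Units.val_pow_eq_pow_val, ZMod.val_mul, ← Nat.gcd_rec, Nat.gcd_comm,
    Nat.Coprime.gcd_mul_left_cancel _ (ZMod.val_coe_unit_coprime _)]

theorem sqRel_natCast_mul_iff {n d e : ℕ} [NeZero n] (hde : d * e = n) (x y : ℕ) :
    sqRel n (d * x : ℕ) (d * y : ℕ) ↔ sqRel e x y := by
  subst hde
  have hd : d ≠ 0 := left_ne_zero_of_mul (NeZero.ne (d * e))
  have he : e ∣ d * e := dvd_mul_left e d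
  have key (J : ℕ) : ((d * y : ℕ) : ZMod (d * e)) = (J : ZMod (d * e)) ^ 2 * (d * x : ℕ) ↔
      (y : ZMod e) = (J : ZMod e) ^ 2 * x := by
    simp only [← Nat.cast_pow, ← Nat.cast_mul, ZMod.natCast_eq_natCast_iff]
    rw [mul_left_comm, Nat.ModEq.mul_left_cancel_iff' hd]
  calc sqRel (d * e) (d * x : ℕ) (d * y : ℕ)
      ↔ ∃ j : (ZMod (d * e))ˣ, (y : ZMod e) = (ZMod.unitsMap he j : ZMod e) ^ 2 * x := by
        refine exists_congr fun j => ?_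
        rw [ZMod.unitsMap_val, ZMod.cast_eq_val, ← key, ZMod.natCast_zmod_val]
    _ ↔ sqRel e x y :=
      ((ZMod.unitsMap_surjective he).exists (p := fun j => (y : ZMod e) = j ^ 2 * x)).symm

theorem sqRel_iff_gcd_eq {n : ℕ} [NeZero n] {a b : ZMod n} :
    sqRel n a b ↔ b.val.gcd n = a.val.gcd n ∧
      sqRel (n / a.val.gcd n) (a.val / a.val.gcd n : ℕ) (b.val / a.val.gcd n : ℕ) := by
  have key (hg : b.val.gcd n = a.val.gcd n) : sqRel n a b ↔
      sqRel (n / a.val.gcd n) (a.val / a.val.gcd n : ℕ) (b.val / a.val.gcd n : ℕ) := by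
    rw [← sqRel_natCast_mul_iff (Nat.mul_div_cancel' (Nat.gcd_dvd_right _ _)),
      Nat.mul_div_cancel' (Nat.gcd_dvd_left _ _), ← hg, Nat.mul_div_cancel' (Nat.gcd_dvd_left _ _),
      ZMod.natCast_zmod_val, ZMod.natCast_zmod_val]
  exact ⟨fun h => ⟨h.gcd_val_eq, (key h.gcd_val_eq).mp h⟩, fun ⟨hg, h⟩ => (key hg).mpr h⟩

theorem sqRel_natCast_prime_pow_iff {p m : ℕ} [Fact p.Prime] (hp : Odd p) (hm : m ≠ 0)
    {x y : ℕ} (hx : x.Coprime p) (hy : y.Coprime p) :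
    sqRel (p ^ m) x y ↔ (IsSquare (x : ZMod p) ↔ IsSquare (y : ZMod p)) := by
  set X := ZMod.unitOfCoprime x (hx.pow_right m)
  set Y := ZMod.unitOfCoprime y (hy.pow_right m)
  have hcast (z : ℕ) (hz : z.Coprime (p ^ m)) :
      (ZMod.unitsMap (dvd_pow_self p hm) (ZMod.unitOfCoprime z hz) : ZMod p) = z := by
    rw [ZMod.unitsMap_val, ZMod.coe_unitOfCoprime, ZMod.cast_natCast (dvd_pow_self p hm)]
  have hne (z : ℕ) (hz : z.Coprime p) : (z : ZMod p) ≠ 0 :=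
    ((ZMod.isUnit_iff_coprime z p).mpr hz).ne_zero
  calc sqRel (p ^ m) x y ↔ sqRel (p ^ m) X Y := by
        rw [ZMod.coe_unitOfCoprime, ZMod.coe_unitOfCoprime]
    _ ↔ IsSquare (Y / X) := sqRel_units_iff X Y
    _ ↔ IsSquare (ZMod.unitsMap (dvd_pow_self p hm) (Y / X)) :=
      (ZMod.isSquare_unitsMap_prime_pow_iff hp hm).symm
    _ ↔ IsSquare ((y : ZMod p) / x) := by
      rw [← Units.isSquare_val_iff, map_div, Units.val_div_eq_div_val, hcast, hcast]
    _ ↔ _ := FiniteField.isSquare_div_iff (hne x hx) (hne y hy)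

open Classical in
/-- For `a = p^v w` with `p ∤ w` this is `2v` or `2v + 1` according as `w` is a square mod `p`;
`a = 0` gets `2K`. -/
noncomputable def sqClassIndex (p K : ℕ) (a : ZMod (p ^ K)) : ℕ :=
  2 * padicValNat p (a.val.gcd (p ^ K)) +
    if IsSquare ((a.val / a.val.gcd (p ^ K) : ℕ) : ZMod p) then 0 else 1

open Classical in
theorem two_mul_add_ite_eq_iff {v w : ℕ} {P Q : Prop} :
    2 * v + (if P then 0 else 1) = 2 * w + (if Q then 0 else 1) ↔ v = w ∧ (P ↔ Q) := by
  by_cases P <;> by_cases Q <;> simp_all <;> omega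

section PrimePower

variable {p K : ℕ} [hp : Fact p.Prime]

theorem exists_gcd_val_eq_pow (a : ZMod (p ^ K)) : ∃ v ≤ K, a.val.gcd (p ^ K) = p ^ v :=
  (Nat.dvd_prime_pow hp.out).mp (Nat.gcd_dvd_right _ _)

theorem sqRel_iff_sqClassIndex_eq (hodd : Odd p) {a b : ZMod (p ^ K)} :
    sqRel (p ^ K) a b ↔ sqClassIndex p K a = sqClassIndex p K b := by
  obtain ⟨v, hvK, hga⟩ := exists_gcd_val_eq_pow a
  obtain ⟨w, -, hgb⟩ := exists_gcd_val_eq_pow b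
  have hcop (c : ZMod (p ^ K)) : (c.val / c.val.gcd (p ^ K)).Coprime (p ^ K / c.val.gcd (p ^ K)) :=
    Nat.coprime_div_gcd_div_gcd (Nat.gcd_pos_of_pos_right _ (pow_pos hp.out.pos K))
  have hcopa : (a.val / p ^ v).Coprime (p ^ K / p ^ v) := hga ▸ hcop a
  have hcopb : (b.val / p ^ w).Coprime (p ^ K / p ^ w) := hgb ▸ hcop b
  rw [sqRel_iff_gcd_eq, sqClassIndex, sqClassIndex, two_mul_add_ite_eq_iff, hga, hgb,
    padicValNat.prime_pow, padicValNat.prime_pow, (Nat.pow_right_injective hp.out.two_le).eq_iff]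
  rcases eq_or_ne v w with rfl | hne
  · simp only [true_and]
    rcases hvK.lt_or_eq with hv | rfl
    · rw [Nat.pow_div hvK hp.out.pos] at hcopa hcopb ⊢
      have hKv : K - v ≠ 0 := by omega
      exact sqRel_natCast_prime_pow_iff hodd hKv (hcopa.coprime_dvd_right (dvd_pow_self p hKv))
        (hcopb.coprime_dvd_right (dvd_pow_self p hKv))
    · rw [Nat.div_eq_of_lt (ZMod.val_lt a), Nat.div_eq_of_lt (ZMod.val_lt b)]
      exact iff_of_true ⟨1, by simp⟩ Iff.rfl
  · simp [hne, hne.symm]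

theorem sqClassIndex_lt (a : ZMod (p ^ K)) : sqClassIndex p K a < 2 * K + 1 := by
  obtain ⟨v, hvK, hg⟩ := exists_gcd_val_eq_pow a
  rw [sqClassIndex, hg, padicValNat.prime_pow]
  rcases hvK.lt_or_eq with hv | rfl
  · split_ifs <;> omega
  · rw [Nat.div_eq_of_lt (ZMod.val_lt a), Nat.cast_zero, if_pos IsSquare.zero]
    omega

theorem sqClassIndex_zero : sqClassIndex p K 0 = 2 * K := by
  rw [sqClassIndex, ZMod.val_zero, Nat.gcd_zero_left, padicValNat.prime_pow, Nat.zero_div,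
    Nat.cast_zero, if_pos IsSquare.zero, add_zero]

theorem sqClassIndex_natCast_pow_mul {v c : ℕ} (hv : v < K) (hc0 : 0 < c) (hcp : c < p) :
    sqClassIndex p K (p ^ v * c : ℕ) = 2 * v + if IsSquare (c : ZMod p) then 0 else 1 := by
  have hlt : p ^ v * c < p ^ K :=
    calc p ^ v * c < p ^ v * p := Nat.mul_lt_mul_of_pos_left hcp (pow_pos hp.out.pos v)
      _ = p ^ (v + 1) := (pow_succ p v).symm
      _ ≤ p ^ K := Nat.pow_le_pow_right hp.out.pos hv
  have hgcd : (p ^ v * c).gcd (p ^ K) = p ^ v := by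
    rw [← Nat.add_sub_of_le hv.le, pow_add, Nat.gcd_mul_left,
      ((Nat.coprime_of_lt_prime hc0.ne' hcp hp.out).symm.pow_right _).gcd_eq_one, mul_one]
  rw [sqClassIndex, ZMod.val_natCast_of_lt hlt, hgcd, padicValNat.prime_pow,
    Nat.mul_div_cancel_left _ (pow_pos hp.out.pos v)]
  -- the two sides differ only in the `Decidable` instance of the `if`
  congr

theorem exists_sqClassIndex_eq (hodd : Odd p) {i : ℕ} (hi : i < 2 * K + 1) :
    ∃ a : ZMod (p ^ K), sqClassIndex p K a = i := by
  obtain ⟨v, rfl | rfl⟩ := Nat.even_or_odd' i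
  · rcases (by omega : v < K ∨ v = K) with hv | rfl
    · refine ⟨(p ^ v * 1 : ℕ), ?_⟩
      rw [sqClassIndex_natCast_pow_mul hv one_pos hp.out.one_lt, Nat.cast_one,
        if_pos IsSquare.one, add_zero]
    · exact ⟨0, sqClassIndex_zero⟩
  · have hchar : ringChar (ZMod p) ≠ 2 := by
      rw [ZMod.ringChar_zmod_n]
      rintro rfl
      exact absurd hodd (by decide)
    obtain ⟨c, hc⟩ := FiniteField.exists_nonsquare hchar
    have hc0 : c ≠ 0 := by rintro rfl; exact hc IsSquare.zero
    refine ⟨(p ^ v * c.val : ℕ), ?_⟩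
    rw [sqClassIndex_natCast_pow_mul (by omega) (ZMod.val_pos.mpr hc0) (ZMod.val_lt c),
      ZMod.natCast_zmod_val, if_neg hc]

end PrimePower

theorem card_sqRel_classes_odd_prime_power_general (p K : ℕ) (hp : p.Prime) (hodd : Odd p) :
    Nat.card (Quot (sqRel (p ^ K))) = 2 * K + 1 := by
  have := Fact.mk hp
  let index : ZMod (p ^ K) → Fin (2 * K + 1) := fun a => ⟨sqClassIndex p K a, sqClassIndex_lt a⟩
  have hindex : Function.Surjective index := fun i =>
    (exists_sqClassIndex_eq hodd i.2).imp fun _ ha => Fin.ext ha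
  calc Nat.card (Quot (sqRel (p ^ K)))
      = Nat.card (Quotient (Setoid.ker index)) :=
        Nat.card_congr (Quot.congrRight fun a b =>
          (sqRel_iff_sqClassIndex_eq hodd).trans
            ((Fin.ext_iff (a := index a) (b := index b)).symm.trans Setoid.ker_def.symm))
    _ = Nat.card (Fin (2 * K + 1)) :=
        Nat.card_congr (Setoid.quotientKerEquivOfSurjective index hindex)
    _ = 2 * K + 1 := Nat.card_fin _

/-- For an odd prime `p` and `K ≥ 1`, the number of equivalence classes of `ℤ/p^Kℤ`
under the square-multiplication relation is `2K + 1`. -/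
theorem card_sqRel_classes_odd_prime_power (p K : ℕ) (hp : p.Prime) (hodd : Odd p)
    (hK : 1 ≤ K) :
    Nat.card (Quot (sqRel (p ^ K))) = 2 * K + 1 :=
  card_sqRel_classes_odd_prime_power_general p K hp hodd
end

section
/- Let K ≥ 1 and consider ℤ/2^Kℤ with the square-multiplication relation. The number of equivalence classes equals 2 if K = 1, equals 4 if K = 2, and equals 4(K − 1) if K ≥ 3. -/
lemma sq_lift : ∀ m : ℕ, 3 ≤ m → ∀ a b : ℤ, Odd a → Odd b → a ≡ b [ZMOD 8] →
    ∃ j : ℤ, Odd j ∧ j ^ 2 * a ≡ b [ZMOD 2 ^ m] := by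
  intro m hm
  induction m, hm using Nat.le_induction with
  | base =>
    intro a b ha hb hab
    exact ⟨1, odd_one, by simpa using hab⟩
  | succ m hm ih =>
    intro a b ha hb hab
    obtain ⟨j, hj, hmod⟩ := ih a b ha hb hab
    have hdvd : (2:ℤ) ^ m ∣ (j ^ 2 * a - b) := Int.ModEq.dvd hmod.symm
    obtain ⟨d, hd⟩ := hdvd
    set c : ℤ := 2 ^ (m - 1) with hc
    have h2 : (2:ℤ) ^ m = c * 2 := by
      rw [hc, ← pow_succ]; congr 1; omega
    have hceven : Even c := ⟨2 ^ (m - 2), by rw [hc, ← two_mul, ← pow_succ']; congr 1; omega⟩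
    rcases Int.even_or_odd d with hde | hdo
    · refine ⟨j, hj, Int.ModEq.symm ((Int.modEq_iff_dvd).2 ?_)⟩
      obtain ⟨e, he⟩ := hde
      exact ⟨e, by rw [hd, he, pow_succ]; ring⟩
    · refine ⟨j + c, hj.add_even hceven, ?_⟩
      have hsum : Even (d + j * a) := hdo.add_odd (hj.mul ha)
      obtain ⟨e, he⟩ := hsum
      refine Int.ModEq.symm ((Int.modEq_iff_dvd).2 ?_)
      have hcc' : c * c = c * 2 * 2 * 2 ^ (m - 3) := by
        calc c * c = (2:ℤ) ^ (m - 1 + (m - 1)) := by rw [hc, pow_add]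
          _ = (2:ℤ) ^ (m - 1 + 1 + 1 + (m - 3)) := by congr 1; omega
          _ = c * 2 * 2 * 2 ^ (m - 3) := by rw [pow_add, pow_succ, pow_succ, hc]
      refine ⟨e + 2 ^ (m - 3) * a, ?_⟩
      rw [h2] at hd
      have hgoal : (j + c) ^ 2 * a - b = c * 2 * 2 * (e + 2 ^ (m - 3) * a) := by
        linear_combination hd + 2 * c * he + a * hcc'
      rw [hgoal, pow_succ, h2]

/-- class code of `x` in `ZMod (2^K)` (via its `val`). -/
def cls (K x : ℕ) : ℕ :=
  if x = 0 then 4 * K - 5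
  else if padicValNat 2 x = K - 1 then 4 * K - 6
  else if padicValNat 2 x = K - 2 then
    4 * (K - 2) + (x / 2 ^ padicValNat 2 x) % 4 / 2
  else 4 * padicValNat 2 x + (x / 2 ^ padicValNat 2 x) % 8 / 2

lemma pv_two_pow_mul_odd {v o : ℕ} (ho : Odd o) : padicValNat 2 (2 ^ v * o) = v := by
  have ho0 : o ≠ 0 := by rintro rfl; simp at ho
  rw [padicValNat.mul (by positivity) ho0, padicValNat.prime_pow,
    padicValNat.eq_zero_of_not_dvd (by rw [Nat.two_dvd_ne_zero, ← Nat.odd_iff]; exact ho), add_zero]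

lemma odd_ordCompl {x : ℕ} (hx : x ≠ 0) : Odd (x / 2 ^ padicValNat 2 x) := by
  rw [Nat.odd_iff, ← Nat.two_dvd_ne_zero, ← Nat.factorization_def x Nat.prime_two]
  exact Nat.not_dvd_ordCompl Nat.prime_two hx

lemma ordProj_mul_ordCompl {x : ℕ} (hx : x ≠ 0) :
    2 ^ padicValNat 2 x * (x / 2 ^ padicValNat 2 x) = x := by
  rw [← Nat.factorization_def x Nat.prime_two]
  exact Nat.ordProj_mul_ordCompl_eq_self x 2

lemma pv_lt {K x : ℕ} (hx : x ≠ 0) (hlt : x < 2 ^ K) : padicValNat 2 x < K := by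
  have h1 : 2 ^ padicValNat 2 x ≤ x := Nat.le_of_dvd (Nat.pos_of_ne_zero hx) pow_padicValNat_dvd
  have := h1.trans_lt hlt
  exact (pow_lt_pow_iff_right₀ (by norm_num)).1 this

lemma pv_eq_of {y v : ℕ} (hy : y ≠ 0) (h1 : 2 ^ v ∣ y) (h2 : ¬ 2 ^ (v + 1) ∣ y) :
    padicValNat 2 y = v := by
  have ha : v ≤ (Nat.factorization y) 2 :=
    (Nat.Prime.pow_dvd_iff_le_factorization Nat.prime_two hy).1 h1
  have hb : ¬ (v + 1 ≤ (Nat.factorization y) 2) :=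
    fun h => h2 ((Nat.Prime.pow_dvd_iff_le_factorization Nat.prime_two hy).2 h)
  rw [← Nat.factorization_def y Nat.prime_two]; omega

lemma modeq_cancel {c n a b : ℕ} (hc : c ≠ 0) (h : c * a ≡ c * b [MOD c * n]) :
    a ≡ b [MOD n] := by
  rw [Nat.modEq_iff_dvd] at h ⊢
  push_cast at h ⊢
  rcases h with ⟨t, ht⟩
  refine ⟨t, ?_⟩
  have hc' : (c : ℤ) ≠ 0 := by exact_mod_cast hc
  apply mul_left_cancel₀ hc'
  linarith [ht]

lemma cls_invariant {K x y m : ℕ} (hK : 3 ≤ K) (hx0 : x ≠ 0) (hy0 : y ≠ 0)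
    (hx : x < 2 ^ K) (hm : m % 8 = 1) (hmod : y ≡ m * x [MOD 2 ^ K]) :
    cls K x = cls K y := by
  set v := padicValNat 2 x with hv
  have hvK : v < K := pv_lt hx0 hx
  have hmodd : Odd m := Nat.odd_iff.2 (by omega)
  have hm0 : m ≠ 0 := by omega
  have hdx : 2 ^ v ∣ x := pow_padicValNat_dvd
  -- y has the same 2-adic valuation
  have hpvmx : padicValNat 2 (m * x) = v := by
    rw [padicValNat.mul hm0 hx0, padicValNat.eq_zero_of_not_dvd
      (by rw [Nat.two_dvd_ne_zero, ← Nat.odd_iff]; exact hmodd), zero_add]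
  have hdmx : 2 ^ v ∣ m * x := hdx.mul_left m
  have hndmx : ¬ 2 ^ (v + 1) ∣ m * x := by
    intro h
    have := (Nat.Prime.pow_dvd_iff_le_factorization Nat.prime_two
      (by positivity)).1 h
    rw [Nat.factorization_def _ Nat.prime_two, hpvmx] at this
    omega
  have hy1 : 2 ^ v ∣ y := by
    have h1 : y ≡ m * x [MOD 2 ^ v] := hmod.of_dvd (pow_dvd_pow 2 hvK.le)
    have := (Nat.modEq_zero_iff_dvd).2 hdmx
    exact (Nat.modEq_zero_iff_dvd).1 (h1.trans this)
  have hy2 : ¬ 2 ^ (v + 1) ∣ y := by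
    intro h
    have h1 : y ≡ m * x [MOD 2 ^ (v + 1)] := hmod.of_dvd (pow_dvd_pow 2 hvK)
    exact hndmx ((Nat.modEq_zero_iff_dvd).1
      (h1.symm.trans ((Nat.modEq_zero_iff_dvd).2 h)))
  have hpvy : padicValNat 2 y = v := pv_eq_of hy0 hy1 hy2
  -- odd parts
  set x' := x / 2 ^ v with hx'
  set y' := y / 2 ^ v with hy'
  have hxeq : 2 ^ v * x' = x := ordProj_mul_ordCompl hx0
  have hyeq : 2 ^ v * y' = y := by rw [hy', ← hpvy]; exact ordProj_mul_ordCompl hy0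
  have hcancel : y' ≡ m * x' [MOD 2 ^ (K - v)] := by
    apply modeq_cancel (c := 2 ^ v) (by positivity)
    have h2K : 2 ^ v * 2 ^ (K - v) = 2 ^ K := by
      rw [← pow_add]; congr 1; omega
    rw [h2K, hyeq]
    have : m * x = 2 ^ v * (m * x') := by rw [← hxeq]; ring
    rw [← this]
    exact hmod
  -- now case split on v
  rcases eq_or_ne v (K - 1) with hvK1 | hvK1
  · unfold cls
    rw [if_neg hx0, if_neg hy0, hpvy, ← hv, if_pos hvK1, if_pos hvK1]
  rcases eq_or_ne v (K - 2) with hvK2 | hvK2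
  · have hKv : K - v = 2 := by omega
    have hm4 : m ≡ 1 [MOD 4] := show m % 4 = 1 % 4 by omega
    have h4 : y' ≡ x' [MOD 4] := by
      have := hcancel
      rw [hKv] at this
      calc y' ≡ m * x' [MOD 4] := by exact_mod_cast this
        _ ≡ 1 * x' [MOD 4] := hm4.mul_right x'
        _ = x' := one_mul x'
    unfold cls
    rw [if_neg hx0, if_neg hy0, hpvy, ← hv, if_neg hvK1, if_neg hvK1,
      if_pos hvK2, if_pos hvK2, ← hx', ← hy', h4]
  · have hKv : 3 ≤ K - v := by omega
    have hm8 : m ≡ 1 [MOD 8] := show m % 8 = 1 % 8 by omega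
    have h8 : y' ≡ x' [MOD 8] := by
      have h1 : y' ≡ m * x' [MOD 8] := by
        refine hcancel.of_dvd ?_
        calc (8:ℕ) = 2 ^ 3 := by norm_num
          _ ∣ 2 ^ (K - v) := pow_dvd_pow 2 hKv
      calc y' ≡ m * x' [MOD 8] := h1
        _ ≡ 1 * x' [MOD 8] := hm8.mul_right x'
        _ = x' := one_mul x'
    unfold cls
    rw [if_neg hx0, if_neg hy0, hpvy, ← hv, if_neg hvK1, if_neg hvK1,
      if_neg hvK2, if_neg hvK2, ← hx', ← hy', h8]

lemma odd_sq_mod_eight {j : ℕ} (hj : Odd j) : j ^ 2 % 8 = 1 := by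
  obtain ⟨k, rfl⟩ := hj
  have h : (2 * k + 1) ^ 2 = 4 * (k * (k + 1)) + 1 := by ring
  obtain ⟨t, ht⟩ := Nat.even_mul_succ_self k
  omega

lemma cls_eq_of_sqRel {K : ℕ} (hK : 3 ≤ K) {a b : ZMod (2 ^ K)}
    (h : sqRel (2 ^ K) a b) : cls K a.val = cls K b.val := by
  haveI : NeZero (2 ^ K) := ⟨by positivity⟩
  obtain ⟨j, hj⟩ := h
  rcases eq_or_ne a 0 with rfl | ha0
  · rw [hj, mul_zero]
  · have hb0 : b ≠ 0 := by
      rw [hj]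
      exact fun hb => ha0 (((j.isUnit.pow 2).mul_right_eq_zero).1 hb)
    have h8 : (8 : ℕ) ∣ 2 ^ K := by
      calc (8:ℕ) = 2 ^ 3 := by norm_num
        _ ∣ 2 ^ K := pow_dvd_pow 2 hK
    -- the multiplier
    set m := ((j : ZMod (2 ^ K)) ^ 2).val with hm
    have hjodd : Odd (j : ZMod (2 ^ K)).val := by
      have := ZMod.val_coe_unit_coprime j
      exact Nat.coprime_two_right.1 (this.coprime_dvd_right (dvd_pow_self 2 (by omega)))
    have hm8 : m % 8 = 1 := by
      have h1 : m = (j : ZMod (2 ^ K)).val ^ 2 % 2 ^ K := by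
        rw [hm, sq, sq, ZMod.val_mul]
      rw [h1, Nat.mod_mod_of_dvd _ h8, odd_sq_mod_eight hjodd]
    have hmod : b.val ≡ m * a.val [MOD 2 ^ K] := by
      have h1 : b.val = m * a.val % 2 ^ K := by rw [hj, ZMod.val_mul]
      rw [h1]
      exact (Nat.mod_modEq _ _).symm.symm
    exact cls_invariant hK (by simpa [ZMod.val_eq_zero] using ha0)
      (by simpa [ZMod.val_eq_zero] using hb0) (ZMod.val_lt a) hm8 hmod

lemma odd_int_isUnit_zmod {K : ℕ} (hK : 1 ≤ K) {j : ℤ} (hj : Odd j) :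
    IsUnit ((j : ZMod (2 ^ K))) := by
  haveI : NeZero (2 ^ K) := ⟨by positivity⟩
  set z := (j : ZMod (2 ^ K)) with hz
  have hval : (z.val : ZMod 2) = 1 := by
    have h2 : (2 : ℕ) ∣ 2 ^ K := dvd_pow_self 2 (by omega)
    have hcast : ((z.val : ℕ) : ZMod 2) = ZMod.castHom h2 (ZMod 2) z := by
      rw [← ZMod.natCast_zmod_val z]
      push_cast
      simp
    rw [hcast, hz, map_intCast]
    obtain ⟨t, rfl⟩ := hj
    push_cast
    rw [show (2 : ZMod 2) = 0 by decide]
    ring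
  have hodd : Odd z.val := by
    rw [Nat.odd_iff]
    have := (ZMod.natCast_eq_natCast_iff z.val 1 2).1 (by simpa using hval)
    simpa [Nat.ModEq] using this
  have := (ZMod.isUnit_iff_coprime z.val (2 ^ K)).2
    ((Nat.coprime_two_right.2 hodd).pow_right K)
  rwa [ZMod.natCast_zmod_val z] at this

lemma cls_ne_top {K y : ℕ} (hK : 3 ≤ K) (hy0 : y ≠ 0) (hy : y < 2 ^ K) :
    cls K y ≠ 4 * K - 5 := by
  have hvK : padicValNat 2 y < K := pv_lt hy0 hy
  unfold cls
  rw [if_neg hy0]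
  split_ifs with h1 h2 <;> omega

lemma sqRel_of_cls_eq {K : ℕ} (hK : 3 ≤ K) {a b : ZMod (2 ^ K)}
    (h : cls K a.val = cls K b.val) : sqRel (2 ^ K) a b := by
  haveI : NeZero (2 ^ K) := ⟨by positivity⟩
  rcases eq_or_ne a 0 with rfl | ha0
  · rcases eq_or_ne b 0 with rfl | hb0
    · exact ⟨1, by simp⟩
    · exfalso
      rw [show (0 : ZMod (2^K)).val = 0 from ZMod.val_zero] at h
      exact cls_ne_top hK (by simpa [ZMod.val_eq_zero] using hb0) (ZMod.val_lt b)
        (h ▸ (by unfold cls; rw [if_pos rfl]))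
  rcases eq_or_ne b 0 with rfl | hb0
  · exfalso
    rw [show (0 : ZMod (2^K)).val = 0 from ZMod.val_zero] at h
    exact cls_ne_top hK (by simpa [ZMod.val_eq_zero] using ha0) (ZMod.val_lt a)
      (h.trans (by unfold cls; rw [if_pos rfl]))
  -- both nonzero
  set x := a.val with hxdef
  set y := b.val with hydef
  have hx0 : x ≠ 0 := by rw [hxdef, Ne, ZMod.val_eq_zero]; exact ha0
  have hy0 : y ≠ 0 := by rw [hydef, Ne, ZMod.val_eq_zero]; exact hb0
  have hxlt : x < 2 ^ K := ZMod.val_lt a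
  have hylt : y < 2 ^ K := ZMod.val_lt b
  set v := padicValNat 2 x with hv
  set w := padicValNat 2 y with hw
  have hvK : v < K := pv_lt hx0 hxlt
  have hwK : w < K := pv_lt hy0 hylt
  set x' := x / 2 ^ v with hx'
  set y' := y / 2 ^ w with hy'
  have hxodd : Odd x' := odd_ordCompl hx0
  have hyodd : Odd y' := odd_ordCompl hy0
  have hx2 : x' % 2 = 1 := Nat.odd_iff.1 hxodd
  have hy2 : y' % 2 = 1 := Nat.odd_iff.1 hyodd
  have hxeq : 2 ^ v * x' = x := ordProj_mul_ordCompl hx0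
  have hyeq : 2 ^ w * y' = y := ordProj_mul_ordCompl hy0
  -- a = cast of x etc.
  have hax : ((x : ℕ) : ZMod (2 ^ K)) = a := by
    rw [hxdef]; exact ZMod.natCast_zmod_val a
  have hby : ((y : ℕ) : ZMod (2 ^ K)) = b := by
    rw [hydef]; exact ZMod.natCast_zmod_val b
  unfold cls at h
  rw [if_neg hx0, if_neg hy0, ← hv, ← hw, ← hx', ← hy'] at h
  clear_value v w x' y'
  have hb8x : x' % 8 / 2 ≤ 3 := by omega
  have hb8y : y' % 8 / 2 ≤ 3 := by omega
  rcases eq_or_ne v (K - 1) with hv1 | hv1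
  · rcases eq_or_ne w (K - 1) with hw1 | hw1
    · -- both valuations K-1 : forced a = b
      have hx'1 : x' < 2 := by
        have h2 : 2 ^ v * x' < 2 ^ v * 2 := by
          rw [hxeq]
          calc x < 2 ^ K := hxlt
            _ = 2 ^ v * 2 := by rw [← pow_succ]; congr 1; omega
        exact lt_of_mul_lt_mul_left h2 (Nat.zero_le _)
      have hy'1 : y' < 2 := by
        have h2 : 2 ^ w * y' < 2 ^ w * 2 := by
          rw [hyeq]
          calc y < 2 ^ K := hylt
            _ = 2 ^ w * 2 := by rw [← pow_succ]; congr 1; omega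
        exact lt_of_mul_lt_mul_left h2 (Nat.zero_le _)
      have hxx : x' = 1 := by omega
      have hyy : y' = 1 := by omega
      have hxy : x = y := by rw [← hxeq, ← hyeq, hxx, hyy, hv1, hw1]
      refine ⟨1, ?_⟩
      rw [← hax, ← hby, hxy]
      simp
    · exfalso
      rw [if_pos hv1, if_neg hw1] at h
      split_ifs at h <;> omega
  rcases eq_or_ne w (K - 1) with hw1 | hw1
  · exfalso
    rw [if_neg hv1, if_pos hw1] at h
    split_ifs at h <;> omega
  rcases eq_or_ne v (K - 2) with hv2 | hv2
  · rcases eq_or_ne w (K - 2) with hw2 | hw2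
    · -- both valuations K-2 : forced a = b
      rw [if_neg hv1, if_neg hw1, if_pos hv2, if_pos hw2] at h
      have hx'4 : x' < 4 := by
        have h2 : 2 ^ v * x' < 2 ^ v * 4 := by
          rw [hxeq]
          calc x < 2 ^ K := hxlt
            _ = 2 ^ v * 4 := by
              rw [show (4:ℕ) = 2^2 by norm_num, ← pow_add]; congr 1; omega
        exact lt_of_mul_lt_mul_left h2 (Nat.zero_le _)
      have hy'4 : y' < 4 := by
        have h2 : 2 ^ w * y' < 2 ^ w * 4 := by
          rw [hyeq]
          calc y < 2 ^ K := hylt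
            _ = 2 ^ w * 4 := by
              rw [show (4:ℕ) = 2^2 by norm_num, ← pow_add]; congr 1; omega
        exact lt_of_mul_lt_mul_left h2 (Nat.zero_le _)
      have hxy : x = y := by
        rw [← hxeq, ← hyeq, hv2, hw2]
        have hxv : x' = y' := by omega
        rw [hxv]
      refine ⟨1, ?_⟩
      rw [← hax, ← hby, hxy]
      simp
    · exfalso
      rw [if_neg hv1, if_neg hw1, if_pos hv2, if_neg hw2] at h
      omega
  rcases eq_or_ne w (K - 2) with hw2 | hw2
  · exfalso
    rw [if_neg hv1, if_neg hw1, if_neg hv2, if_pos hw2] at h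
    omega
  -- main case : small valuations
  rw [if_neg hv1, if_neg hw1, if_neg hv2, if_neg hw2] at h
  have hvw : v = w := by omega
  have hmod8 : x' % 8 = y' % 8 := by omega
  have hKv : 3 ≤ K - v := by omega
  obtain ⟨j, hjodd, hjmod⟩ := sq_lift (K - v) hKv (x' : ℤ) (y' : ℤ)
    (by exact_mod_cast hxodd) (by exact_mod_cast hyodd)
    (by unfold Int.ModEq; omega)
  have hu : IsUnit ((j : ZMod (2 ^ K))) := odd_int_isUnit_zmod (by omega) hjodd
  refine ⟨hu.unit, ?_⟩
  rw [IsUnit.unit_spec]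
  have hfull : j ^ 2 * (x : ℤ) ≡ (y : ℤ) [ZMOD (2 : ℤ) ^ K] := by
    have hsplit : ((2:ℤ) ^ K) = 2 ^ v * 2 ^ (K - v) := by
      rw [← pow_add]; congr 1; omega
    rw [hsplit]
    calc j ^ 2 * (x : ℤ) = 2 ^ v * (j ^ 2 * (x' : ℤ)) := by
          rw [← hxeq]; push_cast; ring
      _ ≡ 2 ^ v * (y' : ℤ) [ZMOD 2 ^ v * 2 ^ (K - v)] := hjmod.mul_left'
      _ = (y : ℤ) := by rw [← hyeq]; push_cast; rw [hvw]
  have hfull' : j ^ 2 * (x : ℤ) ≡ (y : ℤ) [ZMOD ((2 ^ K : ℕ) : ℤ)] := by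
    exact_mod_cast hfull
  have hcast := (ZMod.intCast_eq_intCast_iff _ _ (2 ^ K)).2 hfull'
  push_cast at hcast
  rw [hax, hby] at hcast
  rw [← hcast]

lemma cls_lt {K x : ℕ} (hK : 3 ≤ K) (hx : x < 2 ^ K) : cls K x < 4 * (K - 1) := by
  unfold cls
  rcases eq_or_ne x 0 with rfl | h0
  · rw [if_pos rfl]; omega
  · rw [if_neg h0]
    have := pv_lt h0 hx
    split_ifs <;> omega

lemma cls_cast {K v s : ℕ} (hlt : 2 ^ v * (2 * s + 1) < 2 ^ K) :
    cls K (((2 ^ v * (2 * s + 1) : ℕ) : ZMod (2 ^ K))).val =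
      if v = K - 1 then 4 * K - 6
      else if v = K - 2 then 4 * (K - 2) + (2 * s + 1) % 4 / 2
      else 4 * v + (2 * s + 1) % 8 / 2 := by
  haveI : NeZero (2 ^ K) := ⟨by positivity⟩
  rw [ZMod.val_cast_of_lt hlt]
  have hodd : Odd (2 * s + 1) := ⟨s, by ring⟩
  have hpv : padicValNat 2 (2 ^ v * (2 * s + 1)) = v := pv_two_pow_mul_odd hodd
  have hne : 2 ^ v * (2 * s + 1) ≠ 0 := by positivity
  have hdiv : (2 ^ v * (2 * s + 1)) / 2 ^ v = 2 * s + 1 :=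
    Nat.mul_div_cancel_left _ (by positivity)
  unfold cls
  rw [if_neg hne, hpv, hdiv]

lemma cls_surj {K : ℕ} (hK : 3 ≤ K) (c : ℕ) (hc : c < 4 * (K - 1)) :
    ∃ a : ZMod (2 ^ K), cls K a.val = c := by
  haveI : NeZero (2 ^ K) := ⟨by positivity⟩
  have hgen : ∀ v s : ℕ, v + 3 ≤ K → s ≤ 3 → 2 ^ v * (2 * s + 1) < 2 ^ K := by
    intro v s hv hs
    calc 2 ^ v * (2 * s + 1) < 2 ^ v * 8 := by
          have h0 : (0:ℕ) < 2 ^ v := by positivity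
          have h8 : 2 * s + 1 < 8 := by omega
          exact Nat.mul_lt_mul_of_le_of_lt (le_refl _) h8 h0
      _ = 2 ^ (v + 3) := by rw [pow_add]; norm_num
      _ ≤ 2 ^ K := Nat.pow_le_pow_right (by norm_num) hv
  rcases (show c = 4*K-5 ∨ c = 4*K-6 ∨ c = 4*K-7 ∨ c = 4*K-8 ∨ (c < 4*(K-2)) by omega)
    with hc' | hc' | hc' | hc' | hc'
  · refine ⟨0, ?_⟩
    rw [show (0 : ZMod (2^K)).val = 0 from ZMod.val_zero]
    unfold cls
    rw [if_pos rfl, hc']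
  · refine ⟨((2 ^ (K-1) * (2 * 0 + 1) : ℕ) : ZMod (2 ^ K)), ?_⟩
    have hlt : 2 ^ (K-1) * (2 * 0 + 1) < 2 ^ K := by
      have : 2 ^ (K-1) < 2 ^ K := (pow_lt_pow_iff_right₀ (by norm_num)).2 (by omega)
      omega
    rw [cls_cast hlt, if_pos rfl, hc']
  · refine ⟨((2 ^ (K-2) * (2 * 1 + 1) : ℕ) : ZMod (2 ^ K)), ?_⟩
    have hlt : 2 ^ (K-2) * (2 * 1 + 1) < 2 ^ K := by
      calc 2 ^ (K-2) * (2 * 1 + 1) < 2 ^ (K-2) * 4 := by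
            have : (0:ℕ) < 2 ^ (K-2) := by positivity
            omega
        _ = 2 ^ K := by rw [show (4:ℕ) = 2^2 by norm_num, ← pow_add]; congr 1; omega
    rw [cls_cast hlt, if_neg (by omega), if_pos rfl]
    omega
  · refine ⟨((2 ^ (K-2) * (2 * 0 + 1) : ℕ) : ZMod (2 ^ K)), ?_⟩
    have hlt : 2 ^ (K-2) * (2 * 0 + 1) < 2 ^ K := by
      calc 2 ^ (K-2) * (2 * 0 + 1) < 2 ^ (K-2) * 4 := by
            have : (0:ℕ) < 2 ^ (K-2) := by positivity
            omega
        _ = 2 ^ K := by rw [show (4:ℕ) = 2^2 by norm_num, ← pow_add]; congr 1; omega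
    rw [cls_cast hlt, if_neg (by omega), if_pos rfl]
    omega
  · refine ⟨((2 ^ (c / 4) * (2 * (c % 4) + 1) : ℕ) : ZMod (2 ^ K)), ?_⟩
    have hv3 : c / 4 + 3 ≤ K := by omega
    have hlt := hgen (c / 4) (c % 4) hv3 (by omega)
    rw [cls_cast hlt, if_neg (by omega), if_neg (by omega)]
    omega

lemma count_main {K : ℕ} (hK : 3 ≤ K) :
    Nat.card (Quot (sqRel (2 ^ K))) = 4 * (K - 1) := by
  haveI : NeZero (2 ^ K) := ⟨by positivity⟩
  have hbound : ∀ a : ZMod (2 ^ K), cls K a.val < 4 * (K - 1) :=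
    fun a => cls_lt hK (ZMod.val_lt a)
  let F : Quot (sqRel (2 ^ K)) → Fin (4 * (K - 1)) :=
    Quot.lift (fun a => ⟨cls K a.val, hbound a⟩)
      (fun a b hab => Fin.ext (cls_eq_of_sqRel hK hab))
  have hbij : Function.Bijective F := by
    constructor
    · intro q1 q2
      induction q1 using Quot.ind with | _ a =>
      induction q2 using Quot.ind with | _ b =>
      intro hF
      exact Quot.sound (sqRel_of_cls_eq hK (by simpa [F, Fin.ext_iff] using hF))
    · rintro ⟨c, hc⟩
      obtain ⟨a, ha⟩ := cls_surj hK c hc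
      exact ⟨Quot.mk _ a, by simp [F, Fin.ext_iff, ha]⟩
  rw [Nat.card_eq_of_bijective F hbij, Nat.card_eq_fintype_card, Fintype.card_fin]

lemma quot_eq_of_trivial (n : ℕ) (h : ∀ j : (ZMod n)ˣ, (j : ZMod n) ^ 2 = 1) :
    Nat.card (Quot (sqRel n)) = n := by
  have e : Quot (sqRel n) ≃ ZMod n :=
    { toFun := Quot.lift id (fun a b ⟨j, hj⟩ => by simp [hj, h j])
      invFun := Quot.mk _
      left_inv := by rintro ⟨a⟩; rfl
      right_inv := fun a => rfl }
  rw [Nat.card_congr e, Nat.card_zmod]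

/-- For `K ≥ 1`, the number of equivalence classes of `ℤ/2^Kℤ` under the
square-multiplication relation is `2` if `K = 1`, `4` if `K = 2`, and `4(K−1)` if `K ≥ 3`. -/
theorem card_sqRel_classes_two_power (K : ℕ) (hK : 1 ≤ K) :
    (K = 1 → Nat.card (Quot (sqRel (2 ^ K))) = 2) ∧
    (K = 2 → Nat.card (Quot (sqRel (2 ^ K))) = 4) ∧
    (3 ≤ K → Nat.card (Quot (sqRel (2 ^ K))) = 4 * (K - 1)) := by
  refine ⟨?_, ?_, ?_⟩
  · rintro rfl
    exact quot_eq_of_trivial 2 (by decide)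
  · rintro rfl
    exact quot_eq_of_trivial 4 (by decide)
  · intro h3
    exact count_main h3
end

section
/- Let m₁, m₂ ≥ 1 be coprime natural numbers. Then the number of equivalence classes of ℤ/(m₁m₂)ℤ under the square-multiplication relation equals the product of the number of equivalence classes of ℤ/m₁ℤ and the number of equivalence classes of ℤ/m₂ℤ under their respective square-multiplication relations. -/
/-- For coprime `m₁, m₂ ≥ 1`, the number of equivalence classes of `ℤ/(m₁m₂)ℤ` under the
square-multiplication relation is the product of the numbers of equivalence classes for
`ℤ/m₁ℤ` and `ℤ/m₂ℤ`. -/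
theorem card_sqRel_classes_mul (m₁ m₂ : ℕ) (h₁ : 1 ≤ m₁) (h₂ : 1 ≤ m₂)
    (hco : Nat.Coprime m₁ m₂) :
    Nat.card (Quot (sqRel (m₁ * m₂))) =
      Nat.card (Quot (sqRel m₁)) * Nat.card (Quot (sqRel m₂)) := by
  classical
  let e := ZMod.chineseRemainder hco
  have key : ∀ a b : ZMod (m₁ * m₂), sqRel (m₁ * m₂) a b ↔
      (sqRel m₁ (e a).1 (e b).1 ∧ sqRel m₂ (e a).2 (e b).2) := by
    intro a b
    constructor
    · rintro ⟨j, rfl⟩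
      have h : e ((j : ZMod (m₁ * m₂)) ^ 2 * a) = (e (j : ZMod (m₁ * m₂))) ^ 2 * e a := by
        rw [map_mul, map_pow]
      refine ⟨⟨Units.map ((MonoidHom.fst (ZMod m₁) (ZMod m₂)).comp (e : ZMod (m₁ * m₂) →+* _).toMonoidHom) j, ?_⟩,
        ⟨Units.map ((MonoidHom.snd (ZMod m₁) (ZMod m₂)).comp (e : ZMod (m₁ * m₂) →+* _).toMonoidHom) j, ?_⟩⟩
      · simp [h, Units.coe_map]
      · simp [h, Units.coe_map]
    · rintro ⟨⟨j₁, h1⟩, ⟨j₂, h2⟩⟩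
      set u : (ZMod m₁ × ZMod m₂)ˣ := (MulEquiv.prodUnits).symm (j₁, j₂) with hu
      refine ⟨Units.map (e.symm : ZMod m₁ × ZMod m₂ →+* ZMod (m₁ * m₂)).toMonoidHom u, ?_⟩
      apply e.injective
      rw [map_mul, map_pow]
      have : (e ((Units.map (e.symm : ZMod m₁ × ZMod m₂ →+* ZMod (m₁ * m₂)).toMonoidHom u :
          (ZMod (m₁ * m₂))ˣ) : ZMod (m₁ * m₂))) = (u : ZMod m₁ × ZMod m₂) := by
        simp [Units.coe_map]
      rw [this]
      have hucoe : (u : ZMod m₁ × ZMod m₂) = ((j₁ : ZMod m₁), (j₂ : ZMod m₂)) := rfl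
      ext <;> simp [hucoe, h1, h2]
  let f : Quot (sqRel (m₁ * m₂)) → Quot (sqRel m₁) × Quot (sqRel m₂) :=
    Quot.lift (fun a => (Quot.mk _ (e a).1, Quot.mk _ (e a).2))
      (fun a b hab => by
        obtain ⟨hl, hr⟩ := (key a b).1 hab
        exact Prod.ext (Quot.sound hl) (Quot.sound hr))
  let g0 : ZMod m₁ → ZMod m₂ → Quot (sqRel (m₁ * m₂)) :=
    fun x y => Quot.mk _ (e.symm (x, y))
  have g0r : ∀ x y y', sqRel m₂ y y' → g0 x y = g0 x y' := by
    intro x y y' h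
    apply Quot.sound
    rw [key]
    simp only [e.apply_symm_apply]
    exact ⟨⟨1, by simp⟩, h⟩
  have g0l : ∀ x x' y, sqRel m₁ x x' → g0 x y = g0 x' y := by
    intro x x' y h
    apply Quot.sound
    rw [key]
    simp only [e.apply_symm_apply]
    exact ⟨h, ⟨1, by simp⟩⟩
  let g : Quot (sqRel m₁) × Quot (sqRel m₂) → Quot (sqRel (m₁ * m₂)) :=
    fun p => Quot.lift₂ g0 g0r g0l p.1 p.2
  have li : Function.LeftInverse g f := by
    intro q
    induction q using Quot.ind with
    | _ a =>
      simp only [f, g, Quot.lift₂, g0]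
      simp
  have ri : Function.RightInverse g f := by
    rintro ⟨x, y⟩
    induction x using Quot.ind with
    | _ a =>
      induction y using Quot.ind with
      | _ b =>
        simp only [f, g, Quot.lift₂, g0]
        simp
  calc Nat.card (Quot (sqRel (m₁ * m₂)))
      = Nat.card (Quot (sqRel m₁) × Quot (sqRel m₂)) := Nat.card_congr ⟨f, g, li, ri⟩
    _ = _ := Nat.card_prod _ _
end
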